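/- arXiv:1001.1948 — 5 statements merged into one kernel-verified Lean document; each statement's English description precedes it below -/
import Mathlib

section
/- (Theorem 2, algebraic core) Collisions acknowledged one-sender-at-a-time form a triangular, hence full-rank, system: let F be a field, n a natural number, v : Fin n → (Fin n → F) a family of vectors (the n received collisions, coordinates indexed by senders), and a : Fin n → Fin n (a(t) is the sender acknowledged upon the t-th reception). Assume (i) for every t, v t (a t) ≠ 0 (the ACKed sender is involved in the t-th collision), and (ii) for all s and t with t < s, v s (a t) = 0 (an acknowledged sender never transmits again). Then a is injective, the family v is linearly independent over F, and v spans F^n; in particular all n unknown packets can be recovered from the n receptions. -/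
/-!
Evaluating at the acknowledged senders `a 0, a 1, …` turns the receptions into a triangular
system with nonzero diagonal: reception `t` involves sender `a t`, and no later reception does.
In a vanishing linear combination of the receptions, evaluating at `a t` for the earliest `t`
with a nonzero coefficient isolates that coefficient times `v t (a t) ≠ 0`, a contradiction.
Independence of `n` vectors in `Fⁿ` then gives spanning.
-/

section Triangular

variable {ι M : Type*} [LinearOrder ι]

theorem injective_of_triangular {N : Type*} [Zero N] {f : ι → M → N} {v : ι → M}
    (hdiag : ∀ t, f t (v t) ≠ 0) (hlt : ∀ s t, t < s → f t (v s) = 0) :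
    Function.Injective f := by
  intro s t hst
  by_contra hne
  rcases lt_or_gt_of_ne hne with h | h
  · exact hdiag t (hst ▸ hlt t s h)
  · exact hdiag s (hst ▸ hlt s t h)

theorem linearIndependent_of_triangular {R : Type*} [Ring R] [NoZeroDivisors R]
    [AddCommGroup M] [Module R M] {f : ι → M →ₗ[R] R} {v : ι → M}
    (hdiag : ∀ t, f t (v t) ≠ 0) (hlt : ∀ s t, t < s → f t (v s) = 0) :
    LinearIndependent R v := by
  rw [linearIndependent_iff]
  intro l hl
  by_contra hl0
  have hne : l.support.Nonempty := Finsupp.support_nonempty_iff.mpr hl0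
  set t := l.support.min' hne
  have ht : t ∈ l.support := l.support.min'_mem hne
  have hsum : ∑ s ∈ l.support, l s * f t (v s) = 0 := by
    simpa [Finsupp.linearCombination_apply, Finsupp.sum] using congrArg (f t) hl
  rw [Finset.sum_eq_single_of_mem t ht fun s hs hst =>
    by rw [hlt s t (lt_of_le_of_ne (l.support.min'_le s hs) (Ne.symm hst)), mul_zero]] at hsum
  exact mul_ne_zero (Finsupp.mem_support_iff.mp ht) (hdiag t) hsum

end Triangular

/-- **Theorem 2, algebraic core.** Collisions acknowledged one-sender-at-a-time form a
triangular, hence full-rank, system. Let `F` be a field, `v : Fin n → (Fin n → F)` the `n`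
received collisions (coordinates indexed by senders), and `a t` the sender acknowledged
upon the `t`-th reception. If (i) the ACKed sender is involved in the `t`-th collision
(`v t (a t) ≠ 0`) and (ii) an acknowledged sender never transmits again
(`t < s → v s (a t) = 0`), then `a` is injective, the family `v` is linearly independent
over `F`, and `v` spans `Fⁿ`. -/
theorem collisions_full_rank (F : Type*) [Field F] (n : ℕ)
    (v : Fin n → Fin n → F) (a : Fin n → Fin n)
    (h_involved : ∀ t : Fin n, v t (a t) ≠ 0)
    (h_never_again : ∀ s t : Fin n, t < s → v s (a t) = 0) :
    Function.Injective a ∧ LinearIndependent F v ∧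
      Submodule.span F (Set.range v) = ⊤ := by
  have hli : LinearIndependent F v :=
    linearIndependent_of_triangular (f := fun t => LinearMap.proj (a t)) h_involved h_never_again
  have ha : Function.Injective a :=
    (injective_of_triangular (f := (fun k (x : Fin n → F) => x k) ∘ a) h_involved
      h_never_again).of_comp
  exact ⟨ha, hli, hli.span_eq_top_of_card_eq_finrank' (by simp)⟩
end

section
/- (Gap lemma for Theorem 3) In the ZigZag model with n senders and erasure probability p ∈ (0,1), the inter-acknowledgment times X_k = T_k − T_{k−1}, k = 1, …, n, are mutually independent, and X_k is geometrically distributed on {1, 2, …} with success probability 1 − p^{n−k+1}: P(X_k = m) = (p^{n−k+1})^{m−1} (1 − p^{n−k+1}) for every integer m ≥ 1. -/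
/-!
Fix gaps `m₀, m₁, … ≥ 1` and put `τ_k = m₀ + ⋯ + m_{k-1}`. On the event that the first `k`
gaps are `m₀, …, m_{k-1}`, the `k`-th acknowledgment happens in slot `τ_k` and exactly `n - k`
senders remain; this event, together with the set `U` of remaining senders, is determined by
the erasures in slots `1, …, τ_k`, because the recursion never looks past the slot it stops
at. Given `U`, the next gap equals `m_k` exactly when every link of `U` is erased in slots
`τ_k + 1, …, τ_k + m_k - 1` but not all of them in slot `τ_k + m_k`: an event of the next
block of slots, independent of the past, of probability `(p^|U|)^(m_k - 1) (1 - p^|U|)`.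
Summing over `U` gives `P(gaps = m) = ∏_k (p^(n-k))^(m_k - 1) (1 - p^(n-k))`.

Hence the joint law of the gaps dominates, on every singleton, the product of the shifted
geometric laws (on vectors with a zero entry the product vanishes). Both are probability
measures, so they are equal, which gives independence and the marginals at once.
-/

open MeasureTheory ProbabilityTheory

/-- The ZigZag acknowledgment process. `zigzagStep n e ω k = (T_k, U_k)` where `T_0 = 0`,
`U_0 = {1,…,n}` (all senders unacknowledged), and for `k ≥ 0`:
`T_{k+1} = inf { t > T_k : ∃ i ∈ U_k, e i t ω = 0 }` (the next slot in which some
unacknowledged sender's link is not erased), and `U_{k+1}` is `U_k` minus the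
smallest-index sender `i ∈ U_k` with `e i T_{k+1} ω = 0` (that sender is acknowledged and
never transmits again). -/
noncomputable def zigzagStep {Ω : Type*} (n : ℕ) (e : Fin n → ℕ → Ω → Bool) (ω : Ω) :
    ℕ → ℕ × Finset (Fin n)
  | 0 => (0, Finset.univ)
  | k + 1 =>
    let prev := zigzagStep n e ω k
    let t := sInf {t : ℕ | prev.1 < t ∧
      (prev.2.filter (fun i => e i t ω = false)).Nonempty}
    (t, prev.2 \ prev.2.filter (fun i =>
      e i t ω = false ∧ ∀ j ∈ prev.2, e j t ω = false → i ≤ j))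

open scoped unitInterval

lemma Nat.sInf_eq_iff_of_ne_zero {s : Set ℕ} {c : ℕ} (hc : c ≠ 0) :
    sInf s = c ↔ c ∈ s ∧ ∀ a < c, a ∉ s := by
  constructor
  · rintro rfl
    exact ⟨Nat.sInf_mem (Nat.nonempty_of_pos_sInf (Nat.pos_of_ne_zero hc)),
      fun a => Nat.notMem_of_lt_sInf⟩
  · rintro ⟨hcs, hlt⟩
    exact IsLeast.csInf_eq ⟨hcs, fun a ha => not_lt.1 fun h => hlt a h ha⟩

lemma measurable_nat_sInf {α : Type*} [MeasurableSpace α] {P : ℕ → α → Prop}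
    (hP : ∀ s, MeasurableSet {x | P s x}) : Measurable fun x => sInf {s | P s x} := by
  refine measurable_to_countable' fun c => ?_
  rcases eq_or_ne c 0 with rfl | hc
  · have : (fun x => sInf {s | P s x}) ⁻¹' {0} = {x | P 0 x} ∪ ⋂ s, {x | P s x}ᶜ := by
      ext x
      simp [Nat.sInf_eq_zero, Set.eq_empty_iff_forall_notMem]
    rw [this]
    exact (hP 0).union (.iInter fun s => (hP s).compl)
  · have : (fun x => sInf {s | P s x}) ⁻¹' {c} = {x | P c x} ∩ ⋂ a < c, {x | P a x}ᶜ := by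
      ext x
      simp [Nat.sInf_eq_iff_of_ne_zero hc]
    rw [this]
    exact (hP c).inter (.biInter (Set.to_countable _) fun a _ => (hP a).compl)

lemma Finset.card_filter_isLeast_eq_one {α : Type*} [LinearOrder α] {s : Finset α}
    {P : α → Prop} [DecidablePred P] [DecidablePred fun i => P i ∧ ∀ j ∈ s, P j → i ≤ j]
    (h : (s.filter P).Nonempty) :
    (s.filter fun i => P i ∧ ∀ j ∈ s, P j → i ≤ j).card = 1 := by
  rw [Finset.card_eq_one]
  refine ⟨(s.filter P).min' h, Finset.ext fun i => ?_⟩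
  have hmin := Finset.mem_filter.1 ((s.filter P).min'_mem h)
  simp only [Finset.mem_filter, Finset.mem_singleton]
  constructor
  · rintro ⟨hi, hPi, hle⟩
    exact le_antisymm (hle _ hmin.1 hmin.2) (Finset.min'_le _ _ (Finset.mem_filter.2 ⟨hi, hPi⟩))
  · rintro rfl
    exact ⟨hmin.1, hmin.2, fun j hj hPj =>
      Finset.min'_le _ _ (Finset.mem_filter.2 ⟨hj, hPj⟩)⟩

lemma MeasureTheory.measure_eq_sum_measure_inter_fiber {Ω β : Type*} [MeasurableSpace Ω]
    [Fintype β] {μ : Measure Ω} {f : Ω → β} (hf : ∀ b, MeasurableSet (f ⁻¹' {b}))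
    (A : Set Ω) :
    μ A = ∑ b, μ (A ∩ f ⁻¹' {b}) := by
  simp_rw [Set.inter_comm A, ← Measure.restrict_apply (hf _)]
  rw [sum_measure_preimage_singleton _ fun b _ => hf b, Finset.coe_univ, Set.preimage_univ,
    Measure.restrict_apply_univ]

lemma Set.preimage_image_eq_of_saturated {α β : Type*} (f : α → β) {s : Set α}
    (hs : ∀ a a', f a' = f a → a ∈ s → a' ∈ s) : f ⁻¹' (f '' s) = s :=
  (Set.subset_preimage_image f s).antisymm' fun _ ⟨a, ha, hfa⟩ => hs a _ hfa.symm ha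

lemma ProbabilityTheory.IndepFun.measure_inter_eq_mul_of_saturated {Ω β γ : Type*}
    [MeasurableSpace Ω] [MeasurableSpace β] [DiscreteMeasurableSpace β] [MeasurableSpace γ]
    [DiscreteMeasurableSpace γ] {μ : Measure Ω} {f : Ω → β} {g : Ω → γ}
    (hfg : IndepFun f g μ) {A B : Set Ω} (hA : ∀ ω ω', f ω' = f ω → ω ∈ A → ω' ∈ A)
    (hB : ∀ ω ω', g ω' = g ω → ω ∈ B → ω' ∈ B) :
    μ (A ∩ B) = μ A * μ B := by
  rw [← Set.preimage_image_eq_of_saturated f hA, ← Set.preimage_image_eq_of_saturated g hB]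
  exact hfg.measure_inter_preimage_eq_mul _ _ .of_discrete .of_discrete

lemma MeasureTheory.Measure.le_of_forall_singleton_le {α : Type*} [MeasurableSpace α]
    [Countable α] [MeasurableSingletonClass α] {μ ν : Measure α}
    (h : ∀ a, μ {a} ≤ ν {a}) : μ ≤ ν := by
  intro s
  rw [← Measure.sum_smul_dirac μ, ← Measure.sum_smul_dirac ν,
    Measure.sum_apply _ .of_discrete, Measure.sum_apply _ .of_discrete]
  exact ENNReal.tsum_le_tsum fun a => mul_le_mul_left (h a) _

instance ProbabilityTheory.isProbabilityMeasure_map_succ_geometricMeasure (r : unitInterval) :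
    IsProbabilityMeasure ((geometricMeasure r).map Nat.succ) :=
  Measure.isProbabilityMeasure_map measurable_from_nat.aemeasurable

lemma ProbabilityTheory.map_succ_geometricMeasure_zero (r : unitInterval) :
    (geometricMeasure r).map Nat.succ {0} = 0 := by
  rw [Measure.map_apply measurable_from_nat (measurableSet_singleton 0)]
  convert measure_empty (μ := geometricMeasure r)
  ext j
  simp

lemma ProbabilityTheory.map_succ_geometricMeasure_singleton {r : unitInterval} (hr : r ≠ 0)
    {m : ℕ} (hm : m ≠ 0) :
    (geometricMeasure r).map Nat.succ {m} = ENNReal.ofReal ((1 - r) ^ (m - 1) * r) := by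
  rw [Measure.map_apply measurable_from_nat (measurableSet_singleton m),
    ← geometricMeasure_singleton hr]
  congr 1
  ext j
  simp only [Set.mem_preimage, Set.mem_singleton_iff]
  omega

lemma unitInterval.symm_pow_ne_zero {q : unitInterval} (hq : (q : ℝ) < 1) {c : ℕ}
    (hc : c ≠ 0) : σ (q ^ c) ≠ 0 := by
  rw [← coe_ne_zero, coe_symm_eq, Set.Icc.coe_pow, sub_ne_zero]
  exact (pow_lt_one₀ q.2.1 hq hc).ne'

namespace ZigZag

open Finset

variable {Ω : Type*} {n : ℕ} (e : Fin n → ℕ → Ω → Bool)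

noncomputable def zigzagNext (u : ℕ × Finset (Fin n)) (ω : Ω) : ℕ × Finset (Fin n) :=
  let t := sInf {t : ℕ | u.1 < t ∧ (u.2.filter (fun i => e i t ω = false)).Nonempty}
  (t, u.2 \ u.2.filter (fun i => e i t ω = false ∧ ∀ j ∈ u.2, e j t ω = false → i ≤ j))

lemma zigzagStep_succ (ω : Ω) (k : ℕ) :
    zigzagStep n e ω (k + 1) = zigzagNext e (zigzagStep n e ω k) ω := rfl

def allErased (U : Finset (Fin n)) (a b : ℕ) : Set Ω :=
  {ω | ∀ s, a < s → s ≤ b → ∀ i ∈ U, e i s ω = true}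

/-- The first slot after `t` in which some link of `U` is not erased is `t + m`. -/
def nextOpenSlotEq (U : Finset (Fin n)) (t m : ℕ) : Set Ω :=
  allErased e U t (t + m - 1) \ allErased e U t (t + m)

variable {e}

lemma allErased_congr {U : Finset (Fin n)} {a b : ℕ} {ω ω' : Ω}
    (h : ∀ i s, a < s → s ≤ b → e i s ω' = e i s ω) :
    ω' ∈ allErased e U a b ↔ ω ∈ allErased e U a b := by
  simp +contextual only [allErased, Set.mem_ofPred_eq, h]

lemma nextOpenSlotEq_congr {U : Finset (Fin n)} {t m : ℕ} {ω ω' : Ω}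
    (h : ∀ i s, t < s → s ≤ t + m → e i s ω' = e i s ω) :
    ω' ∈ nextOpenSlotEq e U t m ↔ ω ∈ nextOpenSlotEq e U t m := by
  simp only [nextOpenSlotEq, Set.mem_sdiff,
    allErased_congr fun i s h1 h2 => h i s h1 (h2.trans (Nat.sub_le _ _)),
    allErased_congr fun i s h1 h2 => h i s h1 h2]

lemma zigzagNext_fst_eq_add_iff {u : ℕ × Finset (Fin n)} {m : ℕ} {ω : Ω} (hm : m ≠ 0) :
    (zigzagNext e u ω).1 = u.1 + m ↔ ω ∈ nextOpenSlotEq e u.2 u.1 m := by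
  simp only [zigzagNext, nextOpenSlotEq, allErased,
    Nat.sInf_eq_iff_of_ne_zero (by omega : u.1 + m ≠ 0), Set.mem_sdiff, Set.mem_ofPred_eq,
    Finset.filter_nonempty_iff, not_and, not_exists, Bool.not_eq_false]
  constructor
  · rintro ⟨⟨-, i, hi, hopen⟩, herased⟩
    refine ⟨fun s h1 h2 => herased s (by omega) h1, fun hall => ?_⟩
    simp [hall _ (by omega) le_rfl i hi] at hopen
  · rintro ⟨herased, hopen⟩
    push Not at hopen
    obtain ⟨s, h1, h2, i, hi, hs⟩ := hopen
    obtain rfl : s = u.1 + m := by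
      by_contra
      exact hs (herased s h1 (by omega) i hi)
    exact ⟨⟨by omega, i, hi, by simpa using hs⟩, fun a ha h1 => herased a h1 (by omega)⟩

lemma card_zigzagNext_snd {u : ℕ × Finset (Fin n)} {ω : Ω} (h : u.1 < (zigzagNext e u ω).1) :
    (zigzagNext e u ω).2.card + 1 = u.2.card := by
  have hne := Nat.sInf_mem (Nat.nonempty_of_pos_sInf (u.1.zero_le.trans_lt h))
  have hone := Finset.card_filter_isLeast_eq_one hne.2
  simp only [zigzagNext]
  rw [Finset.card_sdiff_of_subset (Finset.filter_subset _ _), hone]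
  have := hone ▸ Finset.card_le_card (Finset.filter_subset _ u.2)
  omega

lemma zigzagNext_congr {u : ℕ × Finset (Fin n)} {ω ω' : Ω} {t : ℕ}
    (hlt : u.1 < (zigzagNext e u ω).1) (hle : (zigzagNext e u ω).1 ≤ t)
    (h : ∀ i s, 0 < s → s ≤ t → e i s ω' = e i s ω) :
    zigzagNext e u ω' = zigzagNext e u ω := by
  obtain ⟨m, hm⟩ : ∃ m, (zigzagNext e u ω).1 = u.1 + m :=
    ⟨_, (Nat.add_sub_cancel' hlt.le).symm⟩
  have hm0 : m ≠ 0 := by omega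
  have hfst : (zigzagNext e u ω').1 = (zigzagNext e u ω).1 := by
    rw [hm, zigzagNext_fst_eq_add_iff hm0,
      nextOpenSlotEq_congr fun i s h1 h2 => h i s (by omega) (by omega),
      ← zigzagNext_fst_eq_add_iff hm0, hm]
  have hslot : ∀ i, e i (zigzagNext e u ω).1 ω' = e i (zigzagNext e u ω).1 ω :=
    fun i => h i _ (by omega) hle
  refine Prod.ext hfst ?_
  simp only [zigzagNext] at hfst hslot ⊢
  simp only [hfst, hslot]

lemma measurable_zigzagNext [MeasurableSpace Ω] (hmeas : ∀ i t, Measurable (e i t))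
    (u : ℕ × Finset (Fin n)) : Measurable (zigzagNext e u) := by
  have hslots : ∀ s, Measurable fun ω i => e i s ω := fun s =>
    measurable_pi_lambda _ fun i => hmeas i s
  have htime : Measurable fun ω => (zigzagNext e u ω).1 :=
    measurable_nat_sInf fun s => hslots s (MeasurableSet.of_discrete
      (s := {g : Fin n → Bool | u.1 < s ∧ (u.2.filter fun i => g i = false).Nonempty}))
  have hopen : Measurable fun ω i => e i (zigzagNext e u ω).1 ω :=
    measurable_pi_lambda _ fun i =>
      (measurable_from_prod_countable_right (f := fun x : ℕ × Ω => e i x.1 x.2)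
        fun s => hmeas i s).comp (htime.prodMk measurable_id)
  exact (Measurable.of_discrete (f := fun x : ℕ × (Fin n → Bool) => (x.1,
    u.2 \ u.2.filter fun i => x.2 i = false ∧ ∀ j ∈ u.2, x.2 j = false → i ≤ j))).comp
    (htime.prodMk hopen)

lemma measurable_zigzagStep [MeasurableSpace Ω] (hmeas : ∀ i t, Measurable (e i t)) (k : ℕ) :
    Measurable fun ω => zigzagStep n e ω k := by
  induction k with
  | zero => exact measurable_const
  | succ k ih =>
    exact (measurable_from_prod_countable_right (f := fun x => zigzagNext e x.1 x.2)
      (measurable_zigzagNext hmeas)).comp (ih.prodMk measurable_id)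

variable (e) in
noncomputable def gap (k : ℕ) (ω : Ω) : ℕ :=
  (zigzagStep n e ω (k + 1)).1 - (zigzagStep n e ω k).1

lemma measurable_gap [MeasurableSpace Ω] (hmeas : ∀ i t, Measurable (e i t)) (k : ℕ) :
    Measurable (gap e k) :=
  (measurable_zigzagStep hmeas _).fst.sub (measurable_zigzagStep hmeas _).fst

variable (e) in
def gapsEq (m : ℕ → ℕ) (k : ℕ) : Set Ω := {ω | ∀ j < k, gap e j ω = m j}

section Gaps

variable {m : ℕ → ℕ} {k : ℕ} {ω : Ω}

lemma mem_gapsEq_succ_iff :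
    ω ∈ gapsEq e m (k + 1) ↔ ω ∈ gapsEq e m k ∧ gap e k ω = m k := by
  simp only [gapsEq, Set.mem_ofPred_eq, Nat.forall_lt_succ_right]

lemma fst_zigzagStep_of_mem_gapsEq (hm : ∀ j, m j ≠ 0) (hω : ω ∈ gapsEq e m k) :
    (zigzagStep n e ω k).1 = ∑ j ∈ range k, m j := by
  induction k with
  | zero => rfl
  | succ k ih =>
    rw [mem_gapsEq_succ_iff, gap] at hω
    have := hm k
    rw [sum_range_succ, ← ih hω.1]
    omega

lemma mem_gapsEq_succ_iff_nextOpenSlotEq (hm : ∀ j, m j ≠ 0) :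
    ω ∈ gapsEq e m (k + 1) ↔ ω ∈ gapsEq e m k ∧
      ω ∈ nextOpenSlotEq e (zigzagStep n e ω k).2 (∑ j ∈ range k, m j) (m k) := by
  rw [mem_gapsEq_succ_iff, and_congr_right_iff]
  intro hω
  rw [← fst_zigzagStep_of_mem_gapsEq hm hω, ← zigzagNext_fst_eq_add_iff (hm k), gap,
    ← zigzagStep_succ]
  have := hm k
  omega

lemma fst_zigzagStep_lt_of_mem_gapsEq_succ (hm : ∀ j, m j ≠ 0)
    (hω : ω ∈ gapsEq e m (k + 1)) :
    (zigzagStep n e ω k).1 < (zigzagStep n e ω (k + 1)).1 := by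
  rw [mem_gapsEq_succ_iff, gap] at hω
  have := hm k
  omega

lemma card_snd_zigzagStep_of_mem_gapsEq (hm : ∀ j, m j ≠ 0) (hω : ω ∈ gapsEq e m k) :
    (zigzagStep n e ω k).2.card = n - k := by
  induction k with
  | zero => simp [zigzagStep]
  | succ k ih =>
    have := card_zigzagNext_snd (fst_zigzagStep_lt_of_mem_gapsEq_succ hm hω)
    have := ih (mem_gapsEq_succ_iff.1 hω).1
    rw [zigzagStep_succ]
    omega

lemma zigzagStep_congr_of_mem_gapsEq {ω' : Ω} (hm : ∀ j, m j ≠ 0) (hω : ω ∈ gapsEq e m k)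
    (h : ∀ i s, 0 < s → s ≤ ∑ j ∈ range k, m j → e i s ω' = e i s ω) :
    ω' ∈ gapsEq e m k ∧ zigzagStep n e ω' k = zigzagStep n e ω k := by
  induction k with
  | zero => exact ⟨fun j hj => absurd hj j.not_lt_zero, rfl⟩
  | succ k ih =>
    have hlt := fst_zigzagStep_lt_of_mem_gapsEq_succ hm hω
    have htime := fst_zigzagStep_of_mem_gapsEq hm hω
    rw [mem_gapsEq_succ_iff] at hω ⊢
    obtain ⟨hω', hstate⟩ := ih hω.1 fun i s h1 h2 =>
      h i s h1 (h2.trans (sum_le_sum_of_subset (range_subset_range.2 k.le_succ)))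
    have hnext : zigzagStep n e ω' (k + 1) = zigzagStep n e ω (k + 1) := by
      rw [zigzagStep_succ, zigzagStep_succ, hstate]
      exact zigzagNext_congr hlt htime.le h
    exact ⟨⟨hω', by rw [gap, hnext, hstate]; exact hω.2⟩, hnext⟩

end Gaps

variable (e) in
/-- The erasure indicators of all links in the slots `a + 1, …, b`. -/
def slotsObs (a b : ℕ) (ω : Ω) : (univ ×ˢ Ico a b : Finset (Fin n × ℕ)) → Bool :=
  fun q => e q.1.1 (q.1.2 + 1) ω

lemma eq_of_slotsObs_eq {a b : ℕ} {ω ω' : Ω} (h : slotsObs e a b ω' = slotsObs e a b ω)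
    (i : Fin n) {s : ℕ} (has : a < s) (hsb : s ≤ b) : e i s ω' = e i s ω := by
  have := congrFun h ⟨(i, s - 1), by simp; omega⟩
  simpa only [slotsObs, Nat.sub_add_cancel (by omega : 1 ≤ s)] using this

lemma allErased_eq_biInter (U : Finset (Fin n)) (a b : ℕ) :
    allErased e U a b = ⋂ q ∈ U ×ˢ Ico a b, (fun ω => e q.1 (q.2 + 1) ω) ⁻¹' {true} := by
  ext ω
  simp only [allErased, Set.mem_ofPred_eq, Set.mem_iInter, mem_product, mem_Ico,
    Set.mem_preimage, Set.mem_singleton_iff]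
  constructor
  · rintro h q ⟨hq, hq1, hq2⟩
    exact h (q.2 + 1) (by omega) (by omega) q.1 hq
  · intro h s hs1 hs2 i hi
    simpa [Nat.sub_add_cancel (by omega : 1 ≤ s)] using h (i, s - 1) ⟨hi, by omega, by omega⟩

section Probability

variable [MeasurableSpace Ω] {μ : Measure Ω} {p : ℝ}

lemma measure_allErased (hp : 0 ≤ p)
    (hindep : iIndepFun (fun it : Fin n × ℕ => e it.1 (it.2 + 1)) μ)
    (hdist : ∀ i t, 1 ≤ t → μ {ω | e i t ω = true} = ENNReal.ofReal p)
    (U : Finset (Fin n)) (a b : ℕ) :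
    μ (allErased e U a b) = ENNReal.ofReal (p ^ (U.card * (b - a))) := by
  rw [allErased_eq_biInter,
    hindep.measure_inter_preimage_eq_mul _ fun _ _ => measurableSet_singleton true,
    prod_congr rfl fun q _ => hdist q.1 (q.2 + 1) (by omega), prod_const, card_product,
    Nat.card_Ico, ENNReal.ofReal_pow hp]

lemma measure_nextOpenSlotEq (hmeas : ∀ i t, Measurable (e i t)) (hp : 0 ≤ p)
    (hindep : iIndepFun (fun it : Fin n × ℕ => e it.1 (it.2 + 1)) μ)
    (hdist : ∀ i t, 1 ≤ t → μ {ω | e i t ω = true} = ENNReal.ofReal p)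
    (U : Finset (Fin n)) (t : ℕ) {m : ℕ} (hm : m ≠ 0) :
    μ (nextOpenSlotEq e U t m) = ENNReal.ofReal ((p ^ U.card) ^ (m - 1) * (1 - p ^ U.card)) := by
  have hsub : allErased e U t (t + m) ⊆ allErased e U t (t + m - 1) :=
    fun ω h s hs1 hs2 => h s hs1 (by omega)
  have hmeas' : MeasurableSet (allErased e U t (t + m)) := by
    rw [allErased_eq_biInter]
    exact .biInter (Set.to_countable _) fun q _ => hmeas _ _ (measurableSet_singleton true)
  rw [nextOpenSlotEq, measure_sdiff hsub hmeas'.nullMeasurableSet (by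
      rw [measure_allErased hp hindep hdist]; exact ENNReal.ofReal_ne_top),
    measure_allErased hp hindep hdist, measure_allErased hp hindep hdist,
    ← ENNReal.ofReal_sub _ (by positivity), pow_mul, pow_mul,
    show t + m - 1 - t = m - 1 by omega, show t + m - t = m - 1 + 1 by omega, pow_succ]
  ring_nf

lemma measure_gapsEq_succ_inter_fiber (hmeas : ∀ i t, Measurable (e i t)) (hp : 0 ≤ p)
    (hindep : iIndepFun (fun it : Fin n × ℕ => e it.1 (it.2 + 1)) μ)
    (hdist : ∀ i t, 1 ≤ t → μ {ω | e i t ω = true} = ENNReal.ofReal p)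
    {m : ℕ → ℕ} (hm : ∀ j, m j ≠ 0) (k : ℕ) (V : Finset (Fin n)) :
    μ (gapsEq e m (k + 1) ∩ (fun ω => (zigzagStep n e ω k).2) ⁻¹' {V}) =
      μ (gapsEq e m k ∩ (fun ω => (zigzagStep n e ω k).2) ⁻¹' {V}) *
        ENNReal.ofReal ((p ^ (n - k)) ^ (m k - 1) * (1 - p ^ (n - k))) := by
  set past := gapsEq e m k ∩ (fun ω => (zigzagStep n e ω k).2) ⁻¹' {V}
  set τ := ∑ j ∈ range k, m j
  have hset : gapsEq e m (k + 1) ∩ (fun ω => (zigzagStep n e ω k).2) ⁻¹' {V} =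
      past ∩ nextOpenSlotEq e V τ (m k) := by
    ext ω
    simp only [past, Set.mem_inter_iff, Set.mem_preimage, Set.mem_singleton_iff,
      mem_gapsEq_succ_iff_nextOpenSlotEq hm]
    constructor
    · rintro ⟨⟨h1, h2⟩, rfl⟩
      exact ⟨⟨h1, rfl⟩, h2⟩
    · rintro ⟨⟨h1, rfl⟩, h2⟩
      exact ⟨⟨h1, h2⟩, rfl⟩
  have hblocks : IndepFun (slotsObs e 0 τ) (slotsObs e τ (τ + m k)) μ :=
    hindep.indepFun_finset _ _
      (disjoint_product.2 (Or.inr (Ico_disjoint_Ico_consecutive 0 τ _))) fun _ => hmeas _ _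
  have hpast : ∀ ω ω', slotsObs e 0 τ ω' = slotsObs e 0 τ ω → ω ∈ past → ω' ∈ past := by
    rintro ω ω' h ⟨hω, rfl⟩
    obtain ⟨hω', hstate⟩ := zigzagStep_congr_of_mem_gapsEq hm hω fun i s h1 h2 =>
      eq_of_slotsObs_eq h i h1 h2
    exact ⟨hω', by simp only [Set.mem_preimage, hstate, Set.mem_singleton_iff]⟩
  rw [hset, hblocks.measure_inter_eq_mul_of_saturated hpast fun ω ω' h =>
      (nextOpenSlotEq_congr fun i s h1 h2 => eq_of_slotsObs_eq h i h1 h2).2,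
    measure_nextOpenSlotEq hmeas hp hindep hdist V τ (hm k)]
  rcases past.eq_empty_or_nonempty with h | ⟨ω, hω, rfl⟩
  · simp [h]
  · rw [card_snd_zigzagStep_of_mem_gapsEq hm hω]

lemma measure_gapsEq_succ (hmeas : ∀ i t, Measurable (e i t)) (hp : 0 ≤ p)
    (hindep : iIndepFun (fun it : Fin n × ℕ => e it.1 (it.2 + 1)) μ)
    (hdist : ∀ i t, 1 ≤ t → μ {ω | e i t ω = true} = ENNReal.ofReal p)
    {m : ℕ → ℕ} (hm : ∀ j, m j ≠ 0) (k : ℕ) :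
    μ (gapsEq e m (k + 1)) =
      μ (gapsEq e m k) * ENNReal.ofReal ((p ^ (n - k)) ^ (m k - 1) * (1 - p ^ (n - k))) := by
  have hfiber : ∀ V, MeasurableSet ((fun ω => (zigzagStep n e ω k).2) ⁻¹' {V}) := fun V =>
    (measurable_zigzagStep hmeas k).snd (measurableSet_singleton V)
  rw [measure_eq_sum_measure_inter_fiber hfiber,
    measure_eq_sum_measure_inter_fiber hfiber (gapsEq e m k), sum_mul]
  exact sum_congr rfl fun V _ => measure_gapsEq_succ_inter_fiber hmeas hp hindep hdist hm k V

lemma measure_gapsEq [IsProbabilityMeasure μ] (hmeas : ∀ i t, Measurable (e i t)) (hp : 0 ≤ p)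
    (hindep : iIndepFun (fun it : Fin n × ℕ => e it.1 (it.2 + 1)) μ)
    (hdist : ∀ i t, 1 ≤ t → μ {ω | e i t ω = true} = ENNReal.ofReal p)
    {m : ℕ → ℕ} (hm : ∀ j, m j ≠ 0) (k : ℕ) :
    μ (gapsEq e m k) =
      ∏ j ∈ range k, ENNReal.ofReal ((p ^ (n - j)) ^ (m j - 1) * (1 - p ^ (n - j))) := by
  induction k with
  | zero => simp [gapsEq]
  | succ k ih => rw [measure_gapsEq_succ hmeas hp hindep hdist hm, ih, prod_range_succ]

end Probability

section Law

variable [MeasurableSpace Ω] {μ : Measure Ω} [IsProbabilityMeasure μ] {q : unitInterval}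

open unitInterval

lemma map_gaps_eq_pi (hq : (q : ℝ) < 1) (hmeas : ∀ i t, Measurable (e i t))
    (hindep : iIndepFun (fun it : Fin n × ℕ => e it.1 (it.2 + 1)) μ)
    (hdist : ∀ i t, 1 ≤ t → μ {ω | e i t ω = true} = ENNReal.ofReal q) :
    μ.map (fun ω (k : Fin n) => gap e k ω) =
      Measure.pi fun k : Fin n => (geometricMeasure (σ (q ^ (n - k)))).map Nat.succ := by
  have hX : Measurable fun ω (k : Fin n) => gap e k ω :=
    measurable_pi_lambda _ fun k => measurable_gap hmeas k
  have := Measure.isProbabilityMeasure_map (μ := μ) hX.aemeasurable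
  refine (Measure.eq_of_le_of_isProbabilityMeasure
    (Measure.le_of_forall_singleton_le fun g => ?_)).symm
  rw [Measure.pi_singleton, Measure.map_apply hX (measurableSet_singleton g)]
  by_cases hg : ∀ k, g k ≠ 0
  · let m : ℕ → ℕ := fun j => if h : j < n then g ⟨j, h⟩ else 1
    have hm : ∀ j, m j ≠ 0 := fun j => by
      unfold m
      split_ifs <;> simp [hg]
    have hset : (fun ω (k : Fin n) => gap e k ω) ⁻¹' {g} = gapsEq e m n := by
      ext ω
      simp only [Set.mem_preimage, Set.mem_singleton_iff, funext_iff, gapsEq, Set.mem_ofPred_eq]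
      constructor
      · intro h j hj
        simp [m, hj, h ⟨j, hj⟩]
      · intro h k
        simpa [m, k.2] using h k k.2
    rw [hset, measure_gapsEq hmeas q.2.1 hindep hdist hm, ← Fin.prod_univ_eq_prod_range]
    refine (prod_congr rfl fun k _ => ?_).le
    rw [map_succ_geometricMeasure_singleton (symm_pow_ne_zero hq (by omega)) (hg k)]
    simp [m, coe_symm_eq]
  · push Not at hg
    obtain ⟨k, hk⟩ := hg
    rw [prod_eq_zero (mem_univ k) (by rw [hk]; exact map_succ_geometricMeasure_zero _)]
    exact zero_le

lemma map_gap_eq (hq : (q : ℝ) < 1) (hmeas : ∀ i t, Measurable (e i t))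
    (hindep : iIndepFun (fun it : Fin n × ℕ => e it.1 (it.2 + 1)) μ)
    (hdist : ∀ i t, 1 ≤ t → μ {ω | e i t ω = true} = ENNReal.ofReal q) (k : Fin n) :
    μ.map (gap e k) = (geometricMeasure (σ (q ^ (n - k)))).map Nat.succ := by
  rw [show gap e k = Function.eval k ∘ fun ω (k : Fin n) => gap e k ω from rfl,
    ← Measure.map_map (measurable_pi_apply k)
      (measurable_pi_lambda _ fun k => measurable_gap hmeas k),
    map_gaps_eq_pi hq hmeas hindep hdist, Measure.pi_map_eval]
  simp

end Law

end ZigZag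

open ZigZag unitInterval

theorem zigzag_gaps_independent_geometric_general
    {Ω : Type*} [MeasurableSpace Ω] (μ : Measure Ω) [IsProbabilityMeasure μ]
    (p : ℝ) (hp0 : 0 < p) (hp1 : p < 1) (n : ℕ)
    (e : Fin n → ℕ → Ω → Bool) (hmeas : ∀ i t, Measurable (e i t))
    (hindep : iIndepFun
      (fun it : Fin n × ℕ => e it.1 (it.2 + 1)) μ)
    (hdist : ∀ (i : Fin n) (t : ℕ), 1 ≤ t →
      μ {ω | e i t ω = true} = ENNReal.ofReal p) :
    iIndepFun
      (fun (k : Fin n) (ω : Ω) =>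
        (zigzagStep n e ω ((k : ℕ) + 1)).1 - (zigzagStep n e ω (k : ℕ)).1) μ ∧
    ∀ (k : Fin n) (m : ℕ), 1 ≤ m →
      μ {ω | (zigzagStep n e ω ((k : ℕ) + 1)).1 - (zigzagStep n e ω (k : ℕ)).1 = m} =
        ENNReal.ofReal ((p ^ (n - (k : ℕ))) ^ (m - 1) * (1 - p ^ (n - (k : ℕ)))) := by
  set q : unitInterval := ⟨p, hp0.le, hp1.le⟩
  have hgap : ∀ k : Fin n, Measurable (gap e k) := fun k => measurable_gap hmeas k
  have hlaw := map_gap_eq (q := q) hp1 hmeas hindep hdist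
  refine ⟨?_, fun k m hm => ?_⟩
  · change iIndepFun (fun k : Fin n => gap e k) μ
    rw [iIndepFun_iff_map_fun_eq_pi_map fun k => (hgap k).aemeasurable, funext hlaw]
    exact map_gaps_eq_pi hp1 hmeas hindep hdist
  · change μ (gap e k ⁻¹' {m}) = _
    rw [← Measure.map_apply (hgap k) (measurableSet_singleton m), hlaw,
      map_succ_geometricMeasure_singleton (symm_pow_ne_zero hp1 (by omega)) (by omega)]
    simp [q, coe_symm_eq]

/-- **Gap lemma for Theorem 3.** In the ZigZag model with `n` senders and erasure
probability `p ∈ (0,1)` (the erasure indicators `e i t` for `t ≥ 1` being i.i.d. with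
`P(e i t = 1) = p`), the inter-acknowledgment times `X_k = T_k - T_{k-1}` (here
zero-indexed: `X_k ω = (zigzagStep n e ω (k+1)).1 - (zigzagStep n e ω k).1` for
`k : Fin n`) are mutually independent, and `X_k` is geometric on `{1,2,…}` with success
probability `1 - p^{n-k}` (zero-indexed; i.e. `1 - p^{n-k+1}` in one-indexed form):
`P(X_k = m) = (p^{n-k})^{m-1} (1 - p^{n-k})` for every integer `m ≥ 1`. -/
theorem zigzag_gaps_independent_geometric
    {Ω : Type*} [MeasurableSpace Ω] (μ : Measure Ω) [IsProbabilityMeasure μ]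
    (p : ℝ) (hp0 : 0 < p) (hp1 : p < 1) (n : ℕ) (hn : 1 ≤ n)
    (e : Fin n → ℕ → Ω → Bool) (hmeas : ∀ i t, Measurable (e i t))
    (hindep : iIndepFun
      (fun it : Fin n × ℕ => e it.1 (it.2 + 1)) μ)
    (hdist : ∀ (i : Fin n) (t : ℕ), 1 ≤ t →
      μ {ω | e i t ω = true} = ENNReal.ofReal p) :
    iIndepFun
      (fun (k : Fin n) (ω : Ω) =>
        (zigzagStep n e ω ((k : ℕ) + 1)).1 - (zigzagStep n e ω (k : ℕ)).1) μ ∧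
    ∀ (k : Fin n) (m : ℕ), 1 ≤ m →
      μ {ω | (zigzagStep n e ω ((k : ℕ) + 1)).1 - (zigzagStep n e ω (k : ℕ)).1 = m} =
        ENNReal.ofReal ((p ^ (n - (k : ℕ))) ^ (m - 1) * (1 - p ^ (n - (k : ℕ)))) :=
  zigzag_gaps_independent_geometric_general μ p hp0 hp1 n e hmeas hindep hdist
end

section
/- (Theorem 3, n + O(1) bound) For every real p with 0 < p < 1 and every natural number n ≥ 1, the ZigZag expected delivery time satisfies n ≤ Σ_{k=1}^{n} 1/(1 − p^k) ≤ n + p/(1 − p)^2. -/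
open Finset

/- Each term is `1/(1 - p^k) = 1 + p^k/(1 - p^k)`, and `1 - p^k ≥ 1 - p` for `k ≥ 1`, so the excess
over `1` is at most `p^k/(1 - p)`; summing the geometric series `∑_{k ≥ 1} p^k = p/(1 - p)` bounds the
total excess by `p/(1 - p)^2`. -/

lemma one_div_one_sub_le_one_add_div {p q : ℝ} (hq : 0 ≤ q) (hqp : q ≤ p) (hp : p < 1) :
    1 / (1 - q) ≤ 1 + q / (1 - p) := by
  have hq1 : 0 < 1 - q := by linarith
  calc 1 / (1 - q) = 1 + q / (1 - q) := by field_simp; ring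
    _ ≤ 1 + q / (1 - p) := by gcongr

lemma sum_Icc_one_pow_le {p : ℝ} (hp0 : 0 ≤ p) (hp1 : p < 1) (n : ℕ) :
    ∑ k ∈ Icc 1 n, p ^ k ≤ p / (1 - p) := by
  simpa [← Ico_add_one_right_eq_Icc] using geom_sum_Ico_le_of_lt_one (m := 1) (n := n + 1) hp0 hp1

theorem zigzag_delivery_time_n_plus_O1_general (p : ℝ) (hp0 : 0 < p) (hp1 : p < 1)
    (n : ℕ) :
    (n : ℝ) ≤ ∑ k ∈ Finset.Icc 1 n, 1 / (1 - p ^ k) ∧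
    ∑ k ∈ Finset.Icc 1 n, 1 / (1 - p ^ k) ≤ n + p / (1 - p) ^ 2 := by
  have hpow_le : ∀ k ∈ Icc 1 n, p ^ k ≤ p := fun k hk =>
    pow_le_of_le_one hp0.le hp1.le (by grind)
  constructor
  · calc (n : ℝ) = ∑ k ∈ Icc 1 n, (1 : ℝ) := by simp
      _ ≤ ∑ k ∈ Icc 1 n, 1 / (1 - p ^ k) := sum_le_sum fun k hk =>
          one_le_one_div (by linarith [hpow_le k hk]) (by linarith [pow_nonneg hp0.le k])
  · calc ∑ k ∈ Icc 1 n, 1 / (1 - p ^ k)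
        ≤ ∑ k ∈ Icc 1 n, (1 + p ^ k / (1 - p)) := sum_le_sum fun k hk =>
          one_div_one_sub_le_one_add_div (pow_nonneg hp0.le k) (hpow_le k hk) hp1
      _ = n + (∑ k ∈ Icc 1 n, p ^ k) / (1 - p) := by rw [sum_add_distrib, ← sum_div]; simp
      _ ≤ n + p / (1 - p) / (1 - p) := by gcongr; exact sum_Icc_one_pow_le hp0.le hp1 n
      _ = n + p / (1 - p) ^ 2 := by rw [div_div, sq]

/-- **Theorem 3, n + O(1) bound.** For every real `p` with `0 < p < 1` and every natural
number `n ≥ 1`, the ZigZag expected delivery time `∑_{k=1}^n 1/(1 - p^k)` satisfies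
`n ≤ ∑_{k=1}^n 1/(1 - p^k) ≤ n + p/(1 - p)^2`. -/
theorem zigzag_delivery_time_n_plus_O1 (p : ℝ) (hp0 : 0 < p) (hp1 : p < 1)
    (n : ℕ) (hn : 1 ≤ n) :
    (n : ℝ) ≤ ∑ k ∈ Finset.Icc 1 n, 1 / (1 - p ^ k) ∧
    ∑ k ∈ Finset.Icc 1 n, 1 / (1 - p ^ k) ≤ n + p / (1 - p) ^ 2 :=
  zigzag_delivery_time_n_plus_O1_general p hp0 hp1 n
end

section
/- (Lemma, vertex inequalities) Let p ∈ (0,1), n ≥ 1, and let π be a permutation of {1,…,n}. Define the rate vector λ^π by λ^π_{π(i)} = (1−p) p^{i−1} for i = 1,…,n. Then for every nonempty subset S ⊆ {1,…,n}, Σ_{j∈S} λ^π_j ≤ 1 − p^{|S|}, and equality holds if and only if S = {π(1), …, π(k)} for some k with 1 ≤ k ≤ n. -/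
/-! Indexing senders by priority position, `∑_{j∈S} λ^π_j = (1-p) ∑_{i∈T} pⁱ` with
`T = π⁻¹(S) ⊆ ℕ` and `#T = #S`, while `1 - p^{#S} = (1-p) ∑_{i<#S} pⁱ`. Since `i ↦ pⁱ` is strictly
decreasing, the initial segment `range #S` maximises `∑_{i∈T} pⁱ` among all `#S`-element sets,
and uniquely so: the exponents of `T` outside the segment are all `≥ #S`, and there are as many
of them as there are exponents `< #S` missing from `T`. -/

open Finset

section SumRangeCard

variable {M : Type*} [AddCommMonoid M] [PartialOrder M] [IsOrderedCancelAddMonoid M]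
  {f : ℕ → M}

lemma sum_sdiff_range_card_le_card_nsmul (hf : Antitone f) (T : Finset ℕ) :
    ∑ i ∈ T \ range #T, f i ≤ #(range #T \ T) • f #T := by
  rw [← card_sdiff_eq_card_sdiff_iff.mpr (card_range _).symm]
  exact sum_le_card_nsmul _ _ _ fun i hi => hf (by simpa using (mem_sdiff.mp hi).2)

lemma sum_le_sum_range_card (hf : Antitone f) (T : Finset ℕ) :
    ∑ i ∈ T, f i ≤ ∑ i ∈ range #T, f i := by
  refine sum_sdiff_le_sum_sdiff.mp ((sum_sdiff_range_card_le_card_nsmul hf T).trans ?_)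
  exact card_nsmul_le_sum _ _ _ fun i hi => hf (mem_range.mp (mem_sdiff.mp hi).1).le

lemma sum_lt_sum_range_card (hf : StrictAnti f) {T : Finset ℕ} (hT : T ≠ range #T) :
    ∑ i ∈ T, f i < ∑ i ∈ range #T, f i := by
  have hmissing : (range #T \ T).Nonempty :=
    sdiff_nonempty.mpr fun h => hT (eq_of_subset_of_card_le h (by simp)).symm
  refine sum_sdiff_lt_sum_sdiff.mp ((sum_sdiff_range_card_le_card_nsmul hf.antitone T).trans_lt ?_)
  rw [← sum_const]
  exact sum_lt_sum_of_nonempty hmissing fun i hi => hf (mem_range.mp (mem_sdiff.mp hi).1)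

lemma sum_eq_sum_range_card_iff (hf : StrictAnti f) (T : Finset ℕ) :
    ∑ i ∈ T, f i = ∑ i ∈ range #T, f i ↔ T = range #T :=
  ⟨fun h => by_contra fun hT => (sum_lt_sum_range_card hf hT).ne h, fun h => h ▸ rfl⟩

end SumRangeCard

def priorityRank {n : ℕ} (π : Equiv.Perm (Fin n)) : Fin n ↪ ℕ :=
  π.symm.toEmbedding.trans Fin.valEmbedding

@[simp]
lemma priorityRank_apply {n : ℕ} (π : Equiv.Perm (Fin n)) (j : Fin n) :
    priorityRank π j = π.symm j := rfl

lemma map_priorityRank_filter_lt {n k : ℕ} (π : Equiv.Perm (Fin n)) (hk : k ≤ n) :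
    (univ.filter fun j : Fin n => (π.symm j : ℕ) < k).map (priorityRank π) = range k := by
  ext i
  simp only [mem_map, mem_filter, mem_univ, true_and, priorityRank_apply, mem_range]
  exact ⟨fun ⟨j, hj, hji⟩ => hji ▸ hj,
    fun hi => ⟨π ⟨i, hi.trans_le hk⟩, by simpa using hi, by simp⟩⟩

lemma sum_eq_one_sub_mul_sum_map_priorityRank {p : ℝ} {n : ℕ} {π : Equiv.Perm (Fin n)}
    {lam : Fin n → ℝ} (hlam : ∀ i : Fin n, lam (π i) = (1 - p) * p ^ (i : ℕ)) (S : Finset (Fin n)) :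
    ∑ j ∈ S, lam j = (1 - p) * ∑ i ∈ S.map (priorityRank π), p ^ i := by
  rw [sum_map, mul_sum]
  exact sum_congr rfl fun j _ => by simpa using hlam (π.symm j)

theorem vertex_inequalities_general (p : ℝ) (hp0 : 0 < p) (hp1 : p < 1)
    (n : ℕ) (π : Equiv.Perm (Fin n)) (lam : Fin n → ℝ)
    (hlam : ∀ i : Fin n, lam (π i) = (1 - p) * p ^ (i : ℕ)) :
    ∀ S : Finset (Fin n), S.Nonempty →
      (∑ j ∈ S, lam j) ≤ 1 - p ^ S.card ∧
      ((∑ j ∈ S, lam j) = 1 - p ^ S.card ↔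
        ∃ k : ℕ, 1 ≤ k ∧ k ≤ n ∧
          S = Finset.univ.filter (fun j : Fin n => ((π.symm j : ℕ) < k))) := by
  intro S hS
  have hanti : StrictAnti (p ^ ·) := pow_right_strictAnti₀ hp0 hp1
  have hcard : #(S.map (priorityRank π)) = #S := card_map _
  rw [sum_eq_one_sub_mul_sum_map_priorityRank hlam, ← mul_neg_geom_sum, ← hcard,
    mul_le_mul_iff_right₀ (sub_pos.2 hp1), mul_right_inj' (sub_ne_zero.2 hp1.ne')]
  refine ⟨sum_le_sum_range_card hanti.antitone _, (sum_eq_sum_range_card_iff hanti _).trans ?_⟩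
  rw [hcard]
  constructor
  · intro h
    have hSn : #S ≤ n := (card_le_univ S).trans_eq (Fintype.card_fin n)
    refine ⟨#S, hS.card_pos, hSn, (map_inj (f := priorityRank π)).mp ?_⟩
    rw [h, map_priorityRank_filter_lt π hSn]
  · rintro ⟨k, -, hk, rfl⟩
    rw [map_priorityRank_filter_lt π hk, ← card_map (priorityRank π),
      map_priorityRank_filter_lt π hk, card_range]

/-- **Lemma (vertex inequalities).** Let `p ∈ (0,1)`, `n ≥ 1`, and let `π` be a permutation
of the `n` senders. Define the rate vector `λ^π` by `λ^π_{π(i)} = (1-p) pⁱ` for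
`i = 0, …, n-1` (zero-indexed). Then for every nonempty subset `S` of senders,
`∑_{j∈S} λ^π_j ≤ 1 - p^{|S|}`, with equality iff `S` is the set of the `k` highest-priority
senders `{π(0), …, π(k-1)}` for some `1 ≤ k ≤ n`. -/
theorem vertex_inequalities (p : ℝ) (hp0 : 0 < p) (hp1 : p < 1)
    (n : ℕ) (hn : 1 ≤ n) (π : Equiv.Perm (Fin n)) (lam : Fin n → ℝ)
    (hlam : ∀ i : Fin n, lam (π i) = (1 - p) * p ^ (i : ℕ)) :
    ∀ S : Finset (Fin n), S.Nonempty →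
      (∑ j ∈ S, lam j) ≤ 1 - p ^ S.card ∧
      ((∑ j ∈ S, lam j) = 1 - p ^ S.card ↔
        ∃ k : ℕ, 1 ≤ k ∧ k ≤ n ∧
          S = Finset.univ.filter (fun j : Fin n => ((π.symm j : ℕ) < k))) :=
  vertex_inequalities_general p hp0 hp1 n π lam hlam
end

section
/- (Corollary, dominant face as convex hull of priority points) Let p ∈ (0,1) and n ≥ 1. The dominant face F = { λ ∈ ℝ^n : λ_j ≥ 0 for all j, Σ_{j∈S} λ_j ≤ 1 − p^{|S|} for every nonempty S ⊆ {1,…,n}, and Σ_{j=1}^{n} λ_j = 1 − p^n } equals the convex hull in ℝ^n of the finite set { λ^π : π a permutation of {1,…,n} }, where λ^π_{π(i)} = (1−p) p^{i−1}. Consequently every point of the dominant face is a convex combination of rate vectors achievable by priority-based acknowledgment policies. -/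
/-!
The dominant face `F` is a compact convex polytope, so by Krein–Milman it is the convex hull of
its extreme points, and it suffices to show that every extreme point `x` is a priority vector.
Call `S` tight for `x` when `∑_{j ∈ S} x_j = 1 - p^{|S|}`. Because `k ↦ 1 - p^k` is strictly
concave, two tight sets can always be uncrossed, so the tight sets form a chain. If two senders
`a ≠ b` were not separated by any tight set, moving mass between `x_a` and `x_b` in either
direction would keep `x` in `F` (all coordinates of a point of `F` are positive), contradicting
extremality. So the chain of tight sets is maximal, `∅ ⊂ {j₁} ⊂ {j₁, j₂} ⊂ ⋯`, and
`x_{j_k} = p^{k-1} - p^k`.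
-/

open Finset Topology

theorem Finset.sum_le_sum_range_card_of_antitone {M : Type*} [AddCommMonoid M] [PartialOrder M]
    [IsOrderedAddMonoid M] {f : ℕ → M} (hf : Antitone f) (T : Finset ℕ) :
    ∑ i ∈ T, f i ≤ ∑ i ∈ range #T, f i := by
  set R := range #T
  calc ∑ i ∈ T, f i = ∑ i ∈ T ∩ R, f i + ∑ i ∈ T \ R, f i := (sum_inter_add_sum_sdiff ..).symm
    _ ≤ ∑ i ∈ T ∩ R, f i + #(T \ R) • f #T := by
      gcongr
      exact sum_le_card_nsmul _ _ _ fun i hi => hf (by simpa [R] using (mem_sdiff.1 hi).2)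
    _ = ∑ i ∈ R ∩ T, f i + #(R \ T) • f #T := by
      rw [inter_comm, card_sdiff_comm (card_range _).symm]
    _ ≤ ∑ i ∈ R, f i := by
      rw [← sum_inter_add_sum_sdiff R T]
      gcongr
      exact card_nsmul_le_sum _ _ _ fun i hi => hf (mem_range.1 (mem_sdiff.1 hi).1).le

theorem one_sub_mul_sum_pow_le {p : ℝ} (hp0 : 0 ≤ p) (hp1 : p ≤ 1) (T : Finset ℕ) :
    (1 - p) * ∑ i ∈ T, p ^ i ≤ 1 - p ^ #T := by
  rw [← mul_neg_geom_sum]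
  exact mul_le_mul_of_nonneg_left
    (sum_le_sum_range_card_of_antitone (fun _ _ h => pow_le_pow_of_le_one hp0 hp1 h) T)
    (sub_nonneg.2 hp1)

theorem pow_add_pow_lt_pow_add_pow {p : ℝ} (hp0 : 0 < p) (hp1 : p < 1) {u a b v : ℕ}
    (hua : u < a) (hub : u < b) (huv : u + v = a + b) :
    p ^ a + p ^ b < p ^ u + p ^ v := by
  obtain ⟨s, rfl⟩ := Nat.exists_eq_add_of_lt hua
  obtain ⟨t, rfl⟩ := Nat.exists_eq_add_of_lt hub
  obtain rfl : v = u + (s + 1) + (t + 1) := by omega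
  have hs : p ^ (s + 1) < 1 := pow_lt_one₀ hp0.le hp1 (by omega)
  have ht : p ^ (t + 1) < 1 := pow_lt_one₀ hp0.le hp1 (by omega)
  have hu : 0 < p ^ u := pow_pos hp0 u
  simp only [pow_add] at *
  nlinarith [mul_pos hu (mul_pos (sub_pos.2 hs) (sub_pos.2 ht))]

theorem eq_zero_of_mem_extremePoints_of_eventually_add_smul_mem {E : Type*} [AddCommGroup E]
    [Module ℝ E] {K : Set E} {x d : E} (hx : x ∈ K.extremePoints ℝ)
    (h : ∀ᶠ t in 𝓝 (0 : ℝ), x + t • d ∈ K) : d = 0 := by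
  obtain ⟨ε, hε, hball⟩ := Metric.eventually_nhds_iff.1 h
  have hmem : ∀ t : ℝ, |t| < ε → x + t • d ∈ K := fun t ht => hball (by simpa using ht)
  have hhalf : |ε / 2| < ε := by rw [abs_of_pos (half_pos hε)]; exact half_lt_self hε
  have hseg : x ∈ openSegment ℝ (x + (-(ε / 2)) • d) (x + (ε / 2) • d) :=
    ⟨1 / 2, 1 / 2, by norm_num, by norm_num, by norm_num, by module⟩
  have hend := ((mem_extremePoints.1 hx).2 _ (hmem _ (by rwa [abs_neg])) _ (hmem _ hhalf) hseg).2
  simpa [hε.ne'] using hend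

def dominantFace (p : ℝ) (ι : Type*) [Fintype ι] : Set (ι → ℝ) :=
  {l | (∀ j, 0 ≤ l j) ∧ (∀ S : Finset ι, S.Nonempty → ∑ j ∈ S, l j ≤ 1 - p ^ #S) ∧
    ∑ j, l j = 1 - p ^ Fintype.card ι}

/-- Zero-indexed: `π 0` is the sender of highest priority, served at rate `1 - p`. -/
def priorityVector (p : ℝ) {n : ℕ} (π : Equiv.Perm (Fin n)) : Fin n → ℝ :=
  fun j => (1 - p) * p ^ (π.symm j : ℕ)

def IsTight {ι : Type*} (p : ℝ) (x : ι → ℝ) (S : Finset ι) : Prop :=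
  ∑ j ∈ S, x j = 1 - p ^ #S

section

variable {ι : Type*} {p : ℝ} {x : ι → ℝ} {n : ℕ}

theorem isTight_empty : IsTight p x ∅ := by
  simp [IsTight]

theorem one_sub_mul_sum_pow_le_of_injective {r : ι → ℕ} (hr : Function.Injective r)
    (hp0 : 0 ≤ p) (hp1 : p ≤ 1) (S : Finset ι) :
    ∑ j ∈ S, (1 - p) * p ^ r j ≤ 1 - p ^ #S := by
  rw [← mul_sum, ← sum_image hr.injOn, ← card_image_of_injective S hr]
  exact one_sub_mul_sum_pow_le hp0 hp1 _

variable [Fintype ι]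

theorem sum_le_of_mem_dominantFace (hx : x ∈ dominantFace p ι) (S : Finset ι) :
    ∑ j ∈ S, x j ≤ 1 - p ^ #S := by
  rcases S.eq_empty_or_nonempty with rfl | hS
  · simp
  · exact hx.2.1 S hS

theorem isTight_univ (hx : x ∈ dominantFace p ι) : IsTight p x univ :=
  hx.2.2.trans (by rw [card_univ])

theorem convex_dominantFace : Convex ℝ (dominantFace p ι) := by
  rintro x ⟨hx0, hxS, hx⟩ y ⟨hy0, hyS, hy⟩ a b ha hb hab
  have hsum : ∀ S : Finset ι,
      ∑ j ∈ S, (a • x + b • y) j = a * ∑ j ∈ S, x j + b * ∑ j ∈ S, y j := fun S => by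
    simp [sum_add_distrib, mul_sum]
  refine ⟨fun j => ?_, fun S hS => ?_, ?_⟩
  · exact add_nonneg (mul_nonneg ha (hx0 j)) (mul_nonneg hb (hy0 j))
  · calc _ = a * ∑ j ∈ S, x j + b * ∑ j ∈ S, y j := hsum S
      _ ≤ a * (1 - p ^ #S) + b * (1 - p ^ #S) := by gcongr <;> simp_all
      _ = 1 - p ^ #S := by rw [← add_mul, hab, one_mul]
  · rw [hsum, hx, hy, ← add_mul, hab, one_mul]

theorem isClosed_dominantFace : IsClosed (dominantFace p ι) := by
  simp only [dominantFace, Set.ofPred_and, Set.ofPred_forall]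
  exact (isClosed_iInter fun j => isClosed_le continuous_const (continuous_apply j)).inter
    ((isClosed_iInter fun S => isClosed_iInter fun _ =>
        isClosed_le (by fun_prop) continuous_const).inter
      (isClosed_eq (by fun_prop) continuous_const))

theorem dominantFace_subset_pi_Icc : dominantFace p ι ⊆ Set.univ.pi fun _ => Set.Icc 0 (1 - p) := by
  intro x hx j _
  simpa using And.intro (hx.1 j) (hx.2.1 {j} (singleton_nonempty j))

theorem isCompact_dominantFace : IsCompact (dominantFace p ι) :=
  (isCompact_univ_pi fun _ => isCompact_Icc).of_isClosed_subset isClosed_dominantFace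
    dominantFace_subset_pi_Icc

theorem pos_of_mem_dominantFace (hp0 : 0 < p) (hp1 : p < 1) (hx : x ∈ dominantFace p ι)
    (j : ι) : 0 < x j := by
  classical
  have hcard : Fintype.card ι = #(univ.erase j) + 1 := by
    rw [card_erase_of_mem (mem_univ j), card_univ,
      Nat.sub_add_cancel (Fintype.card_pos_iff.2 ⟨j⟩)]
  have hrest := sum_le_of_mem_dominantFace hx (univ.erase j)
  have htotal := add_sum_erase univ x (mem_univ j)
  rw [hx.2.2, hcard, pow_succ] at htotal
  nlinarith [pow_pos hp0 #(univ.erase j)]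

theorem IsTight.subset_or_subset (hp0 : 0 < p) (hp1 : p < 1) (hx : x ∈ dominantFace p ι)
    {S T : Finset ι} (hS : IsTight p x S) (hT : IsTight p x T) : S ⊆ T ∨ T ⊆ S := by
  classical
  by_contra! h
  have hST : #(S ∩ T) < #S := card_lt_card <|
    inter_subset_left.ssubset_of_not_subset fun hS' => h.1 (hS'.trans inter_subset_right)
  have hTS : #(S ∩ T) < #T := card_lt_card <|
    inter_subset_right.ssubset_of_not_subset fun hT' => h.2 (hT'.trans inter_subset_left)
  have hconcave := pow_add_pow_lt_pow_add_pow hp0 hp1 hST hTS (card_inter_add_card_union S T)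
  have hunion := sum_le_of_mem_dominantFace hx (S ∪ T)
  have hinter := sum_le_of_mem_dominantFace hx (S ∩ T)
  have hsum := sum_union_inter (s₁ := S) (s₂ := T) (f := x)
  unfold IsTight at hS hT
  linarith

theorem IsTight.eq_of_card_eq (hp0 : 0 < p) (hp1 : p < 1) (hx : x ∈ dominantFace p ι)
    {S T : Finset ι} (hS : IsTight p x S) (hT : IsTight p x T) (hcard : #S = #T) : S = T := by
  rcases hS.subset_or_subset hp0 hp1 hx hT with h | h
  · exact eq_of_subset_of_card_le h hcard.ge
  · exact (eq_of_subset_of_card_le h hcard.le).symm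

theorem exists_isTight_greatest (hp0 : 0 < p) (hp1 : p < 1) (hx : x ∈ dominantFace p ι)
    {P : Finset ι → Prop} (hP : ∃ S, IsTight p x S ∧ P S) :
    ∃ L, IsTight p x L ∧ P L ∧ ∀ S, IsTight p x S → P S → S ⊆ L := by
  classical
  obtain ⟨L, hL, hmax⟩ := exists_max_image (univ.filter fun S => IsTight p x S ∧ P S) card
    (by obtain ⟨S, hS⟩ := hP; exact ⟨S, by simpa using hS⟩)
  simp only [mem_filter, mem_univ, true_and, and_imp] at hL hmax
  refine ⟨L, hL.1, hL.2, fun S hS hPS => ?_⟩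
  rcases hS.subset_or_subset hp0 hp1 hx hL.1 with h | h
  · exact h
  · exact (eq_of_subset_of_card_le h (hmax S hS hPS)).ge

theorem exists_isTight_least (hp0 : 0 < p) (hp1 : p < 1) (hx : x ∈ dominantFace p ι)
    {P : Finset ι → Prop} (hP : ∃ S, IsTight p x S ∧ P S) :
    ∃ U, IsTight p x U ∧ P U ∧ ∀ S, IsTight p x S → P S → U ⊆ S := by
  classical
  obtain ⟨U, hU, hmin⟩ := exists_min_image (univ.filter fun S => IsTight p x S ∧ P S) card
    (by obtain ⟨S, hS⟩ := hP; exact ⟨S, by simpa using hS⟩)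
  simp only [mem_filter, mem_univ, true_and, and_imp] at hU hmin
  refine ⟨U, hU.1, hU.2, fun S hS hPS => ?_⟩
  rcases hS.subset_or_subset hp0 hp1 hx hU.1 with h | h
  · exact (eq_of_subset_of_card_le h (hmin S hS hPS)).ge
  · exact h

theorem eventually_add_smul_mem_dominantFace (hp0 : 0 < p) (hp1 : p < 1)
    (hx : x ∈ dominantFace p ι) {d : ι → ℝ} (hd : ∀ S, IsTight p x S → ∑ j ∈ S, d j = 0) :
    ∀ᶠ t in 𝓝 (0 : ℝ), x + t • d ∈ dominantFace p ι := by
  have hsum : ∀ (S : Finset ι) (t : ℝ),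
      ∑ j ∈ S, (x + t • d) j = ∑ j ∈ S, x j + t * ∑ j ∈ S, d j := fun S t => by
    simp [sum_add_distrib, mul_sum]
  refine (Filter.eventually_all.2 fun j => ?_).and
    ((Filter.eventually_all.2 fun S => ?_).and (.of_forall fun t => ?_))
  · have hpos := pos_of_mem_dominantFace hp0 hp1 hx j
    have hnear : ∀ᶠ t in 𝓝 (0 : ℝ), 0 < x j + t * d j :=
      continuousAt_const.eventually_lt (by fun_prop) (by simpa using hpos)
    exact hnear.mono fun t ht => by simpa using ht.le
  · by_cases hS : IsTight p x S
    · exact .of_forall fun t _ => by rw [hsum, hd S hS, hS]; simp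
    · have hlt : ∑ j ∈ S, x j < 1 - p ^ #S := (sum_le_of_mem_dominantFace hx S).lt_of_ne hS
      have hnear : ∀ᶠ t in 𝓝 (0 : ℝ), ∑ j ∈ S, x j + t * ∑ j ∈ S, d j < 1 - p ^ #S :=
        ContinuousAt.eventually_lt (by fun_prop) continuousAt_const (by simpa using hlt)
      exact hnear.mono fun t ht _ => by rw [hsum]; exact ht.le
  · rw [hsum, hd univ (isTight_univ hx), hx.2.2, mul_zero, add_zero]

theorem eq_of_forall_isTight_mem_iff (hp0 : 0 < p) (hp1 : p < 1)
    (hx : x ∈ (dominantFace p ι).extremePoints ℝ) {a b : ι}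
    (hab : ∀ S, IsTight p x S → (a ∈ S ↔ b ∈ S)) : a = b := by
  classical
  by_contra hne
  have hd : Pi.single a 1 - Pi.single b 1 = (0 : ι → ℝ) :=
    eq_zero_of_mem_extremePoints_of_eventually_add_smul_mem hx <|
      eventually_add_smul_mem_dominantFace hp0 hp1 (extremePoints_subset hx) fun S hS => by
        simp [sum_sub_distrib, sum_pi_single', hab S hS]
  simpa [hne] using congrFun hd a

theorem exists_rank_of_mem_extremePoints (hp0 : 0 < p) (hp1 : p < 1)
    (hx : x ∈ (dominantFace p ι).extremePoints ℝ) :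
    ∃ r : ι → ℕ, Function.Injective r ∧ (∀ j, r j < Fintype.card ι) ∧
      ∀ j, x j = (1 - p) * p ^ r j := by
  classical
  have hxF := extremePoints_subset hx
  choose L hL haL hLmax using fun a => exists_isTight_greatest hp0 hp1 hxF (P := (a ∉ ·))
    ⟨∅, isTight_empty, notMem_empty a⟩
  choose U hU haU hUmin using fun a => exists_isTight_least hp0 hp1 hxF (P := (a ∈ ·))
    ⟨univ, isTight_univ hxF, mem_univ a⟩
  have hUL : ∀ a, U a = insert a (L a) := by
    intro a
    have hLU : L a ⊆ U a :=
      ((hL a).subset_or_subset hp0 hp1 hxF (hU a)).resolve_right fun h => haL a (h (haU a))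
    refine Subset.antisymm (fun b hb => ?_) (insert_subset (haU a) hLU)
    by_cases hbL : b ∈ L a
    · exact mem_insert_of_mem hbL
    · rw [eq_of_forall_isTight_mem_iff hp0 hp1 hx fun S hS =>
          ⟨fun hbS => by_contra fun haS => hbL (hLmax a S hS haS hbS),
            fun haS => hUmin a S hS haS hb⟩]
      exact mem_insert_self a _
  have hcardU : ∀ a, #(U a) = #(L a) + 1 := fun a => by rw [hUL, card_insert_of_notMem (haL a)]
  refine ⟨fun a => #(L a), fun a b hab => ?_, fun a => card_lt_univ_of_notMem (haL a), fun a => ?_⟩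
  · have hLab : L a = L b := (hL a).eq_of_card_eq hp0 hp1 hxF (hL b) hab
    have hUab : U a = U b := (hU a).eq_of_card_eq hp0 hp1 hxF (hU b) (by simp [hcardU, hab])
    have ha := haU a
    rw [hUab, hUL, ← hLab, mem_insert] at ha
    exact ha.resolve_right (haL a)
  · have hsplit := hU a
    rw [IsTight, hUL, sum_insert (haL a), card_insert_of_notMem (haL a), hL a, pow_succ] at hsplit
    simp only at hsplit ⊢
    linarith

theorem priorityVector_mem_dominantFace (hp0 : 0 ≤ p) (hp1 : p ≤ 1)
    (π : Equiv.Perm (Fin n)) : priorityVector p π ∈ dominantFace p (Fin n) := by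
  have hr : Function.Injective fun j => (π.symm j : ℕ) := Fin.val_injective.comp π.symm.injective
  refine ⟨fun j => mul_nonneg (sub_nonneg.2 hp1) (pow_nonneg hp0 _),
    fun S _ => one_sub_mul_sum_pow_le_of_injective hr hp0 hp1 S, ?_⟩
  rw [Fintype.card_fin, ← mul_neg_geom_sum, mul_sum,
    ← Fin.sum_univ_eq_sum_range fun i => (1 - p) * p ^ i]
  exact Equiv.sum_comp π.symm fun i => (1 - p) * p ^ (i : ℕ)

theorem extremePoints_dominantFace_subset (hp0 : 0 < p) (hp1 : p < 1) :
    (dominantFace p (Fin n)).extremePoints ℝ ⊆ Set.range (priorityVector p) := by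
  intro x hx
  obtain ⟨r, hr, hrn, hxr⟩ := exists_rank_of_mem_extremePoints hp0 hp1 hx
  let σ : Fin n → Fin n := fun j => ⟨r j, by simpa using hrn j⟩
  have hσ : Function.Injective σ := fun a b h => hr (congrArg Fin.val h)
  refine ⟨(Equiv.ofBijective σ hσ.bijective_of_finite).symm, funext fun j => ?_⟩
  simp [priorityVector, hxr, σ]

theorem dominantFace_eq_convexHull_range_priorityVector (hp0 : 0 < p) (hp1 : p < 1) :
    dominantFace p (Fin n) = convexHull ℝ (Set.range (priorityVector p)) := by
  refine Set.Subset.antisymm ?_ (convexHull_min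
    (Set.range_subset_iff.2 (priorityVector_mem_dominantFace hp0.le hp1.le)) convex_dominantFace)
  calc dominantFace p (Fin n)
      = closure (convexHull ℝ ((dominantFace p (Fin n)).extremePoints ℝ)) :=
        (closure_convexHull_extremePoints isCompact_dominantFace convex_dominantFace).symm
    _ ⊆ closure (convexHull ℝ (Set.range (priorityVector p))) :=
        closure_mono (convexHull_mono (extremePoints_dominantFace_subset hp0 hp1))
    _ = convexHull ℝ (Set.range (priorityVector p)) :=
        (Set.finite_range _).isClosed_convexHull (𝕜 := ℝ) |>.closure_eq

end

theorem dominant_face_eq_convexHull_general (p : ℝ) (hp0 : 0 < p) (hp1 : p < 1)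
    (n : ℕ)
    (F : Set (Fin n → ℝ))
    (hF : F = {l : Fin n → ℝ |
        (∀ j, 0 ≤ l j) ∧
        (∀ S : Finset (Fin n), S.Nonempty → (∑ j ∈ S, l j) ≤ 1 - p ^ S.card) ∧
        (∑ j : Fin n, l j) = 1 - p ^ n})
    (lam : Equiv.Perm (Fin n) → Fin n → ℝ)
    (hlam : ∀ (π : Equiv.Perm (Fin n)) (i : Fin n), lam π (π i) = (1 - p) * p ^ (i : ℕ)) :
    F = convexHull ℝ (Set.range lam) := by
  have hF' : F = dominantFace p (Fin n) := by
    rw [hF]; simp only [dominantFace, Fintype.card_fin]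
  have hlam' : lam = priorityVector p := funext fun π => funext fun j => by
    simpa [priorityVector] using hlam π (π.symm j)
  rw [hF', hlam']
  exact dominantFace_eq_convexHull_range_priorityVector hp0 hp1

/-- **Corollary (dominant face as convex hull of priority points).** Let `p ∈ (0,1)` and
`n ≥ 1`. The dominant face `F` of the stability region (nonnegative `λ` with
`∑_{j∈S} λ_j ≤ 1 - p^{|S|}` for every nonempty `S` and `∑_j λ_j = 1 - pⁿ`) equals the
convex hull in `ℝⁿ` of the finite set of priority rate vectors
`{λ^π : π a permutation}`, where `λ^π_{π(i)} = (1-p) pⁱ` (zero-indexed). -/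
theorem dominant_face_eq_convexHull (p : ℝ) (hp0 : 0 < p) (hp1 : p < 1)
    (n : ℕ) (hn : 1 ≤ n)
    (F : Set (Fin n → ℝ))
    (hF : F = {l : Fin n → ℝ |
        (∀ j, 0 ≤ l j) ∧
        (∀ S : Finset (Fin n), S.Nonempty → (∑ j ∈ S, l j) ≤ 1 - p ^ S.card) ∧
        (∑ j : Fin n, l j) = 1 - p ^ n})
    (lam : Equiv.Perm (Fin n) → Fin n → ℝ)
    (hlam : ∀ (π : Equiv.Perm (Fin n)) (i : Fin n), lam π (π i) = (1 - p) * p ^ (i : ℕ)) :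
    F = convexHull ℝ (Set.range lam) :=
  dominant_face_eq_convexHull_general p hp0 hp1 n F hF lam hlam
end
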